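/- arXiv:2006.10418 — 4 statements merged into one kernel-verified Lean document; each statement's English description precedes it below -/
import Mathlib

section
/- Let K/F be a finite cyclic Galois extension of degree n with Gal(K/F)=⟨σ⟩ and R = K[t;σ]. If f ∈ R is irreducible and h(t) = ĥ(t^n) (with ĥ ∈ F[x] monic) is the monic central left multiple of f of minimal degree, then ĥ(x) is irreducible in F[x]. -/
/-! Evaluating at `t ^ n` gives a ring homomorphism `E : F[X] → R` into the centre of `R`,
because `σ ^ n = 1` and `σ` fixes `F`; moreover `deg (E r) = n · deg r`. Left division by
nonzero elements makes every left ideal of `R` principal, so for irreducible `f` the left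
ideal `R f` is maximal. The preimage of a maximal left ideal under a central homomorphism is
prime: if `E p · E q ∈ R f` but `E p ∉ R f`, write `1 = y · E p + i` with `i ∈ R f`, and then
`E q = y · E (p q) + E q · i ∈ R f`. Hence `{r | E r ∈ R f}` is a prime ideal of `F[X]` in
which `ĥ` has minimal degree, and a nonzero element of minimal degree in a prime ideal of
`F[X]` is irreducible. -/

open Polynomial

theorem Polynomial.commute_eval₂ {A S : Type*} [Semiring A] [Semiring S] {g : A →+* S}
    {z w : S} (hg : ∀ a, Commute (g a) w) (hz : Commute z w) (p : A[X]) :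
    Commute (p.eval₂ g z) w := by
  rw [eval₂_eq_sum]
  exact Commute.sum_left _ _ _ fun i _ => (hg _).mul_left (hz.pow_left i)

theorem Polynomial.eval₂_expand_map {A K S : Type*} [Semiring A] [CommSemiring K] [Semiring S]
    (ψ : A →+* K) (g : K →+* S) (z : S) (n : ℕ) (r : A[X]) :
    (expand K n (r.map ψ)).eval₂ g z = r.eval₂ (g.comp ψ) (z ^ n) := by
  induction r using Polynomial.induction_on' with
  | add p q hp hq => rw [Polynomial.map_add, map_add, eval₂_add, hp, hq, eval₂_add]
  | monomial i a =>
    rw [Polynomial.map_monomial, expand_monomial, eval₂_monomial, eval₂_monomial, ← pow_mul,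
      mul_comm n, RingHom.comp_apply]

theorem AlgEquiv.coe_ringHom_pow_finrank_eq_one {F K : Type*} [Field F] [Field K] [Algebra F K]
    [IsGalois F K] [FiniteDimensional F K] (σ : K ≃ₐ[F] K) :
    (σ : K →+* K) ^ Module.finrank F K = 1 := by
  have h : σ ^ Module.finrank F K = 1 := by
    rw [← IsGalois.card_aut_eq_finrank]
    exact pow_card_eq_one'
  ext a
  change (⇑σ)^[_] a = a
  rw [← AlgEquiv.coe_pow, h, AlgEquiv.one_apply]

theorem Ideal.IsPrime.irreducible_of_natDegree_le {F : Type*} [Field F] {P : Ideal F[X]}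
    (hP : P.IsPrime) {p : F[X]} (hp : p ∈ P) (hp0 : p ≠ 0)
    (hmin : ∀ q ∈ P, q ≠ 0 → p.natDegree ≤ q.natDegree) : Irreducible p := by
  refine ⟨fun hu => hP.ne_top (P.eq_top_of_isUnit_mem hp hu), fun a b hab => ?_⟩
  have ha0 : a ≠ 0 := fun h => hp0 (by rw [hab, h, zero_mul])
  have hb0 : b ≠ 0 := fun h => hp0 (by rw [hab, h, mul_zero])
  have hdeg := congrArg natDegree hab
  rw [natDegree_mul ha0 hb0] at hdeg
  rcases hP.mem_or_mem (hab ▸ hp) with ha | hb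
  · have := hmin a ha ha0
    right
    rw [isUnit_iff_degree_eq_zero, degree_eq_natDegree hb0]
    exact_mod_cast (by omega : b.natDegree = 0)
  · have := hmin b hb hb0
    left
    rw [isUnit_iff_degree_eq_zero, degree_eq_natDegree ha0]
    exact_mod_cast (by omega : a.natDegree = 0)

theorem IsPrincipalIdealRing.of_exists_mul_add {R β : Type*} [Ring R] [LinearOrder β]
    [WellFoundedLT β] (deg : R → β)
    (hdiv : ∀ x f : R, f ≠ 0 → ∃ q r, x = q * f + r ∧ deg r < deg f) :
    IsPrincipalIdealRing R where
  principal I := by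
    by_cases hI : I = ⊥
    · exact hI ▸ bot_isPrincipal
    have hne : {x | x ∈ I ∧ x ≠ 0}.Nonempty := by
      simpa [Set.Nonempty] using (Submodule.ne_bot_iff I).1 hI
    set d := Function.argminOn deg _ hne
    obtain ⟨hdI, hd0⟩ : d ∈ I ∧ d ≠ 0 := Function.argminOn_mem deg _ hne
    refine ⟨⟨d, le_antisymm (fun x hx => ?_) ((Ideal.span_singleton_le_iff_mem I).2 hdI)⟩⟩
    obtain ⟨q, r, rfl, hr⟩ := hdiv x d hd0
    have hrI : r ∈ I := (add_mem_cancel_left (I.mul_mem_left q hdI)).1 hx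
    obtain rfl : r = 0 := by
      by_contra hr0
      exact Function.not_lt_argminOn deg {x | x ∈ I ∧ x ≠ 0} (a := r) ⟨hrI, hr0⟩ hr
    rw [add_zero]
    exact Ideal.mem_span_singleton'.2 ⟨q, rfl⟩

theorem Irreducible.isMaximal_span_singleton {R : Type*} [Ring R] [IsPrincipalIdealRing R]
    [IsDedekindFiniteMonoid R] {f : R} (hf : Irreducible f) : (Ideal.span {f}).IsMaximal := by
  refine ⟨⟨fun htop => hf.not_isUnit ?_, fun J hJ => ?_⟩⟩
  · obtain ⟨g, hg⟩ := Ideal.mem_span_singleton'.1 (htop ▸ Submodule.mem_top : (1 : R) ∈ _)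
    exact IsUnit.of_mul_eq_one_right g hg
  · obtain ⟨d, rfl⟩ := (IsPrincipalIdealRing.principal J).principal
    obtain ⟨e, he⟩ := Ideal.mem_span_singleton'.1 (hJ.le (Ideal.mem_span_singleton_self f))
    rcases hf.isUnit_or_isUnit he.symm with ⟨u, rfl⟩ | hd
    · refine absurd hJ (not_lt_of_ge ((Ideal.span_singleton_le_iff_mem _).2 ?_))
      exact Ideal.mem_span_singleton'.2 ⟨↑u⁻¹, by rw [← he, Units.inv_mul_cancel_left]⟩
    · exact Ideal.eq_top_of_isUnit_mem _ (Ideal.mem_span_singleton_self d) hd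

theorem Ideal.IsMaximal.comap_isPrime_of_commute {A R : Type*} [Semiring A] [Semiring R]
    {M : Ideal R} (hM : M.IsMaximal) (φ : A →+* R) (hφ : ∀ a x, Commute (φ a) x) :
    (M.comap φ).IsPrime := by
  refine Ideal.isPrime_iff.2 ⟨comap_ne_top φ hM.ne_top, fun {a b} hab => ?_⟩
  rw [mem_comap] at hab ⊢
  refine or_iff_not_imp_left.2 fun ha => ?_
  obtain ⟨y, i, hi, hyi⟩ := hM.exists_inv ha
  have : φ b = y * φ (a * b) + φ b * i := calc
    φ b = φ b * (y * φ a + i) := by rw [hyi, mul_one]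
    _ = y * φ (a * b) + φ b * i := by
      rw [mul_add, ← mul_assoc, (hφ b y).eq, mul_assoc, (hφ b (φ a)).eq, map_mul]
  rw [mem_comap, this]
  exact M.add_mem (M.mul_mem_left y hab) (M.mul_mem_left (φ b) hi)

section DivisionRing

variable {K R : Type*} [DivisionRing K] [Ring R]

structure IsSkewPolynomialRing (ι : K →+* R) (t : R) (s : K →+* K)
    (coeff : R →+ (ℕ →₀ K)) : Prop where
  t_mul : ∀ a, t * ι a = ι (s a) * t
  coeff_monomial : ∀ a i, coeff (ι a * t ^ i) = Finsupp.single i a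
  sum_coeff : ∀ x, (coeff x).sum (fun i a => ι a * t ^ i) = x

namespace IsSkewPolynomialRing

noncomputable def toPoly (coeff : R →+ (ℕ →₀ K)) : R →+ K[X] :=
  (toFinsuppIso K).symm.toAddMonoidHom.comp
    (AddMonoidAlgebra.coeffAddEquiv.symm.toAddMonoidHom.comp coeff)

theorem natDegree_toPoly (coeff : R →+ (ℕ →₀ K)) (x : R) :
    (toPoly coeff x).natDegree = (coeff x).support.sup id := by
  rw [← supDegree_eq_natDegree]
  rfl

variable {ι : K →+* R} {t : R} {s : K →+* K} {coeff : R →+ (ℕ →₀ K)}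
  (hR : IsSkewPolynomialRing ι t s coeff)
include hR

theorem eval₂_toPoly (x : R) : (toPoly coeff x).eval₂ ι t = x := by
  rw [eval₂_eq_sum]
  exact hR.sum_coeff x

theorem toPoly_monomial (a : K) (i : ℕ) : toPoly coeff (ι a * t ^ i) = monomial i a := by
  ext j
  change coeff (ι a * t ^ i) j = _
  rw [hR.coeff_monomial, Finsupp.single_apply, Polynomial.coeff_monomial]

theorem toPoly_one : toPoly coeff (1 : R) = 1 := by
  simpa using hR.toPoly_monomial 1 0

theorem toPoly_eval₂ (p : K[X]) : toPoly coeff (p.eval₂ ι t) = p := by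
  induction p using Polynomial.induction_on' with
  | add p q hp hq => rw [eval₂_add, map_add, hp, hq]
  | monomial i a => rw [eval₂_monomial, hR.toPoly_monomial]

theorem toPoly_injective : Function.Injective (toPoly coeff) :=
  Function.LeftInverse.injective hR.eval₂_toPoly

theorem toPoly_ne_zero {x : R} (hx : x ≠ 0) : toPoly coeff x ≠ 0 :=
  fun h => hx (hR.toPoly_injective (h.trans (map_zero _).symm))

theorem t_pow_mul (i : ℕ) (a : K) : t ^ i * ι a = ι ((s ^ i) a) * t ^ i := by
  induction i generalizing a with
  | zero => simp
  | succ i ih =>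
    rw [pow_succ, mul_assoc, hR.t_mul, ← mul_assoc, ih, mul_assoc, ← pow_succ, pow_succ s,
      RingHom.coe_mul, Function.comp_apply]

theorem toPoly_monomial_mul (a : K) (i : ℕ) (y : R) :
    toPoly coeff (ι a * t ^ i * y) = monomial i a * (toPoly coeff y).map (s ^ i) := by
  conv_lhs => rw [← hR.eval₂_toPoly y]
  induction toPoly coeff y using Polynomial.induction_on' with
  | add p q hp hq => rw [eval₂_add, mul_add, map_add, hp, hq, Polynomial.map_add, mul_add]
  | monomial j b =>
    rw [eval₂_monomial, Polynomial.map_monomial, monomial_mul_monomial, ← mul_assoc,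
      mul_assoc (ι a), hR.t_pow_mul, ← mul_assoc, ← map_mul, mul_assoc, ← pow_add,
      hR.toPoly_monomial]

theorem toPoly_mul (x y : R) :
    toPoly coeff (x * y) =
      (toPoly coeff x).sum fun i a => monomial i a * (toPoly coeff y).map (s ^ i) := by
  conv_lhs => rw [← hR.eval₂_toPoly x]
  rw [eval₂_eq_sum, Polynomial.sum, Finset.sum_mul, map_sum]
  exact Finset.sum_congr rfl fun i _ => hR.toPoly_monomial_mul _ i y

theorem degree_toPoly_mul_le (x y : R) :
    (toPoly coeff (x * y)).degree ≤ (toPoly coeff x).degree + (toPoly coeff y).degree := by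
  rw [hR.toPoly_mul, Polynomial.sum]
  refine (degree_sum_le _ _).trans (Finset.sup_le fun i hi => ?_)
  calc (monomial i ((toPoly coeff x).coeff i) * (toPoly coeff y).map (s ^ i)).degree
      ≤ i + (toPoly coeff y).degree :=
        degree_mul_le_of_le (degree_monomial_le _ _) degree_map_le
    _ ≤ (toPoly coeff x).degree + (toPoly coeff y).degree :=
        add_le_add_left (le_degree_of_mem_supp i hi) _

theorem degree_toPoly_monomial_mul {a : K} (ha : a ≠ 0) (i : ℕ) (y : R) :
    (toPoly coeff (ι a * t ^ i * y)).degree = i + (toPoly coeff y).degree := by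
  rw [hR.toPoly_monomial_mul, degree_mul, degree_monomial i ha,
    degree_map_eq_of_injective (s ^ i).injective]

theorem degree_toPoly_mul {x y : R} (hx : x ≠ 0) (hy : y ≠ 0) :
    (toPoly coeff (x * y)).degree = (toPoly coeff x).degree + (toPoly coeff y).degree := by
  set P := toPoly coeff x
  have hP : P ≠ 0 := hR.toPoly_ne_zero hx
  set x₀ := x - ι P.leadingCoeff * t ^ P.natDegree
  have hsplit : x = ι P.leadingCoeff * t ^ P.natDegree + x₀ := (add_sub_cancel _ _).symm
  have hx₀ : toPoly coeff x₀ = P.eraseLead := by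
    rw [map_sub, hR.toPoly_monomial, self_sub_monomial_natDegree_leadingCoeff]
  have hlead := hR.degree_toPoly_monomial_mul (leadingCoeff_ne_zero.2 hP) P.natDegree y
  have hrest : (toPoly coeff (x₀ * y)).degree < P.natDegree + (toPoly coeff y).degree := by
    refine (hR.degree_toPoly_mul_le x₀ y).trans_lt ?_
    rw [hx₀, degree_eq_natDegree (hR.toPoly_ne_zero hy)]
    exact_mod_cast WithBot.add_lt_add_right WithBot.coe_ne_bot
      ((degree_eraseLead_lt hP).trans_eq (degree_eq_natDegree hP))
  conv_lhs => rw [hsplit, add_mul]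
  rw [map_add, degree_add_eq_left_of_degree_lt (hlead ▸ hrest), hlead, degree_eq_natDegree hP]

theorem isDomain : IsDomain R :=
  have : Nontrivial R :=
    nontrivial_of_ne 1 0 fun h => one_ne_zero (by rw [← hR.toPoly_one, h, map_zero])
  have : NoZeroDivisors R := ⟨fun {x y} hxy => by
    by_contra! h
    have hdeg := hR.degree_toPoly_mul h.1 h.2
    rw [hxy, map_zero, degree_zero, eq_comm, WithBot.add_eq_bot, degree_eq_bot,
      degree_eq_bot] at hdeg
    exact hdeg.elim (hR.toPoly_ne_zero h.1) (hR.toPoly_ne_zero h.2)⟩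
  NoZeroDivisors.to_isDomain R

theorem exists_degree_sub_mul_lt {f x : R} (hf : f ≠ 0) (hx : x ≠ 0)
    (hle : (toPoly coeff f).natDegree ≤ (toPoly coeff x).natDegree) :
    ∃ m, (toPoly coeff (x - m * f)).degree < (toPoly coeff x).degree := by
  set F := toPoly coeff f
  set X := toPoly coeff x
  set k := X.natDegree - F.natDegree
  have hsF : (s ^ k) F.leadingCoeff ≠ 0 :=
    (map_ne_zero_iff _ (s ^ k).injective).2 (leadingCoeff_ne_zero.2 (hR.toPoly_ne_zero hf))
  set c := X.leadingCoeff * ((s ^ k) F.leadingCoeff)⁻¹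
  have hc : c ≠ 0 := mul_ne_zero (leadingCoeff_ne_zero.2 (hR.toPoly_ne_zero hx)) (inv_ne_zero hsF)
  refine ⟨ι c * t ^ k, ?_⟩
  rw [map_sub]
  refine degree_sub_lt_left ?_ (hR.toPoly_ne_zero hx) ?_
  · rw [hR.degree_toPoly_monomial_mul hc, degree_eq_natDegree (hR.toPoly_ne_zero hx),
      degree_eq_natDegree (hR.toPoly_ne_zero hf)]
    exact_mod_cast (Nat.sub_add_cancel hle).symm
  · rw [hR.toPoly_monomial_mul, leadingCoeff_mul, leadingCoeff_monomial,
      leadingCoeff_map_of_injective (s ^ k).injective, inv_mul_cancel_right₀ hsF]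

theorem exists_eq_mul_add {f : R} (hf : f ≠ 0) (x : R) :
    ∃ q r, x = q * f + r ∧ (toPoly coeff r).degree < (toPoly coeff f).degree := by
  obtain ⟨D, hD⟩ : ∃ D, (toPoly coeff x).degree = D := ⟨_, rfl⟩
  induction D using WellFoundedLT.induction generalizing x with
  | _ D ih =>
    by_cases hlt : (toPoly coeff x).degree < (toPoly coeff f).degree
    · exact ⟨0, x, by rw [zero_mul, zero_add], hlt⟩
    have hx : x ≠ 0 := by
      rintro rfl
      rw [map_zero, degree_zero, bot_lt_iff_ne_bot, degree_ne_bot] at hlt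
      exact hlt (hR.toPoly_ne_zero hf)
    obtain ⟨m, hm⟩ := hR.exists_degree_sub_mul_lt hf hx (natDegree_le_natDegree (not_lt.1 hlt))
    obtain ⟨q, r, hqr, hr⟩ := ih _ (hD ▸ hm) (x - m * f) rfl
    exact ⟨q + m, r, by rw [add_mul, add_right_comm, ← hqr, sub_add_cancel], hr⟩

theorem isPrincipalIdealRing : IsPrincipalIdealRing R :=
  .of_exists_mul_add (fun x => (toPoly coeff x).degree) fun x _ hf => hR.exists_eq_mul_add hf x

theorem commute_of_commute_ι_of_commute_t {y : R} (hι : ∀ a, Commute y (ι a))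
    (ht : Commute y t) (x : R) : Commute y x := by
  rw [← hR.eval₂_toPoly x]
  exact (commute_eval₂ (fun a => (hι a).symm) ht.symm _).symm

theorem commute_t_pow_ι {n : ℕ} (hsn : s ^ n = 1) (a : K) : Commute (t ^ n) (ι a) := by
  have := hR.t_pow_mul n a
  rwa [hsn] at this

end IsSkewPolynomialRing

end DivisionRing

namespace IsSkewPolynomialRing

variable {F K R : Type*} [Field F] [Field K] [Ring R]
  {ι : K →+* R} {t : R} {s : K →+* K} {coeff : R →+ (ℕ →₀ K)}
  (hR : IsSkewPolynomialRing ι t s coeff) (ψ : F →+* K) {n : ℕ}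
include hR

theorem toPoly_eval₂_t_pow (r : F[X]) :
    toPoly coeff (r.eval₂ (ι.comp ψ) (t ^ n)) = expand K n (r.map ψ) := by
  rw [← eval₂_expand_map, hR.toPoly_eval₂]

theorem natDegree_toPoly_eval₂_t_pow (r : F[X]) :
    (toPoly coeff (r.eval₂ (ι.comp ψ) (t ^ n))).natDegree = r.natDegree * n := by
  rw [hR.toPoly_eval₂_t_pow, natDegree_expand, natDegree_map]

theorem eval₂_t_pow_ne_zero (hn : 0 < n) {r : F[X]} (hr : r ≠ 0) :
    r.eval₂ (ι.comp ψ) (t ^ n) ≠ 0 := fun h => hr <| by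
  have := congrArg (toPoly coeff) h
  rwa [hR.toPoly_eval₂_t_pow, map_zero, expand_eq_zero hn, Polynomial.map_eq_zero] at this

theorem commute_eval₂_t_pow (hsn : s ^ n = 1) (hψ : ∀ a, s (ψ a) = ψ a) (r : F[X])
    (x : R) : Commute (r.eval₂ (ι.comp ψ) (t ^ n)) x := by
  refine hR.commute_of_commute_ι_of_commute_t (fun b => ?_) ?_ x
  · exact commute_eval₂ (fun a => (Commute.all (ψ a) b).map ι) (hR.commute_t_pow_ι hsn b) r
  · refine commute_eval₂ (fun a => ?_) ((Commute.refl t).pow_left n) r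
    have := hR.t_mul (ψ a)
    rw [hψ] at this
    exact this.symm

end IsSkewPolynomialRing

theorem minimal_central_left_multiple_irreducible_general
    (F K : Type) [Field F] [Field K] [Algebra F K] [IsGalois F K]
    (n : ℕ) (hn : 0 < n) (hdim : Module.finrank F K = n)
    (σ : K ≃ₐ[F] K)
    (R : Type) [Ring R] (ι : K →+* R) (t : R)
    (hmul : ∀ a : K, t * ι a = ι (σ a) * t)
    (coeff : R →+ (ℕ →₀ K))
    (hcoeff : ∀ (a : K) (i : ℕ), coeff (ι a * t ^ i) = Finsupp.single i a)
    (hrepr : ∀ x : R, (coeff x).sum (fun i a => ι a * t ^ i) = x)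
    (f : R) (hf : Irreducible f)
    (hhat : Polynomial F) (hmonic : hhat.Monic)
    -- h(t) = ĥ(t^n) is a left multiple of f:
    (hleft : ∃ g : R, (hhat.sum fun k a => ι (algebraMap F K a) * t ^ (n * k)) = g * f)
    -- it is central and of minimal degree among nonzero central left multiples of f:
    (hminimal : ∀ c : R, c ∈ Subring.center R → c ≠ 0 → (∃ g : R, c = g * f) →
      (coeff (hhat.sum fun k a => ι (algebraMap F K a) * t ^ (n * k))).support.sup id ≤
        (coeff c).support.sup id) :
    Irreducible hhat := by
  have hR : IsSkewPolynomialRing ι t (σ : K →+* K) coeff := ⟨hmul, hcoeff, hrepr⟩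
  have := hR.isDomain
  have := hR.isPrincipalIdealRing
  have : FiniteDimensional F K := .of_finrank_pos (hdim ▸ hn)
  have hσn : (σ : K →+* K) ^ n = 1 := hdim ▸ σ.coe_ringHom_pow_finrank_eq_one
  have hcomm := hR.commute_eval₂_t_pow (algebraMap F K) hσn σ.commutes
  let E : F[X] →+* R := eval₂RingHom' (ι.comp (algebraMap F K)) (t ^ n) fun a =>
    (hR.commute_t_pow_ι hσn _).symm
  have hE (r : F[X]) : (r.sum fun k a => ι (algebraMap F K a) * t ^ (n * k)) = E r := by
    simp [E, eval₂_eq_sum, pow_mul]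
  have hdegE (r : F[X]) : (coeff (E r)).support.sup id = r.natDegree * n := by
    rw [← IsSkewPolynomialRing.natDegree_toPoly]
    exact hR.natDegree_toPoly_eval₂_t_pow _ r
  refine (hf.isMaximal_span_singleton.comap_isPrime_of_commute E hcomm).irreducible_of_natDegree_le
    ?_ hmonic.ne_zero fun q hq hq0 => ?_
  · obtain ⟨g, hg⟩ := hleft
    exact Ideal.mem_span_singleton'.2 ⟨g, (hE hhat ▸ hg).symm⟩
  · obtain ⟨g, hg⟩ := Ideal.mem_span_singleton'.1 hq
    have := hminimal (E q) (Subring.mem_center_iff.2 fun x => (hcomm q x).eq.symm)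
      (hR.eval₂_t_pow_ne_zero _ hn hq0) ⟨g, hg.symm⟩
    rw [hE, hdegE, hdegE] at this
    exact Nat.le_of_mul_le_mul_right this hn

/-- If `f ∈ R = K[t;σ]` is irreducible and `h(t) = ĥ(t^n)` (with `ĥ ∈ F[x]` monic)
is the monic central left multiple of `f` of minimal degree, then `ĥ` is
irreducible in `F[x]`. -/
theorem minimal_central_left_multiple_irreducible
    (F K : Type) [Field F] [Field K] [Algebra F K] [IsGalois F K]
    (n : ℕ) (hn : 0 < n) (hdim : Module.finrank F K = n)
    (σ : K ≃ₐ[F] K) (hσgen : ∀ τ : K ≃ₐ[F] K, τ ∈ Subgroup.zpowers σ)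
    (R : Type) [Ring R] (ι : K →+* R) (t : R)
    (hmul : ∀ a : K, t * ι a = ι (σ a) * t)
    (coeff : R →+ (ℕ →₀ K))
    (hcoeff : ∀ (a : K) (i : ℕ), coeff (ι a * t ^ i) = Finsupp.single i a)
    (hrepr : ∀ x : R, (coeff x).sum (fun i a => ι a * t ^ i) = x)
    (f : R) (hf : Irreducible f)
    (hhat : Polynomial F) (hmonic : hhat.Monic)
    -- h(t) = ĥ(t^n) is a left multiple of f:
    (hleft : ∃ g : R, (hhat.sum fun k a => ι (algebraMap F K a) * t ^ (n * k)) = g * f)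
    -- it is central and of minimal degree among nonzero central left multiples of f:
    (hcentral : (hhat.sum fun k a => ι (algebraMap F K a) * t ^ (n * k)) ∈ Subring.center R)
    (hminimal : ∀ c : R, c ∈ Subring.center R → c ≠ 0 → (∃ g : R, c = g * f) →
      (coeff (hhat.sum fun k a => ι (algebraMap F K a) * t ^ (n * k))).support.sup id ≤
        (coeff c).support.sup id) :
    Irreducible hhat :=
  minimal_central_left_multiple_irreducible_general F K n hn hdim σ R ι t hmul coeff hcoeff hrepr f
    hf hhat hmonic hleft hminimal
end

section
/- Let K/F be a finite cyclic Galois extension of degree n with Gal(K/F)=⟨σ⟩, R = K[t;σ], and N the reduced norm of the cyclic algebra K(x)/F(x)-algebra K(t;σ) ≅ (K(x), σ̃, x), where x = t^n. For f(t) = a₀ + a₁t + ⋯ + a_m t^m ∈ R of degree m (a_m ≠ 0), one has N(f) = N_{K/F}(a₀) + ⋯ + (−1)^{m(n−1)} N_{K/F}(a_m) x^m ∈ F[x]. In particular, the constant coefficient of N(f) is N_{K/F}(a₀), the leading coefficient is (−1)^{m(n−1)} N_{K/F}(a_m), and deg_x N(f) = m. -/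
/-!
Substituting `X ↦ X ^ n` and conjugating by `diag(1, X, …, X ^ (n - 1))` turns the matrix of left
multiplication by `f` into the twisted circulant matrix `P i j = ∑_{s + i ≡ j} σ^i(a_s) X^s`,
whose entries have degree at most `m`. The coefficient of `X ^ s` in `P` is the monomial matrix
with entries `σ^i(a_s)` along the permutation `i ↦ i + s` of `ℤ/n`, so the coefficients of
`det P` in degrees `0` and `n m` are `N_{K/F}(a₀)` and `(-1)^{m(n-1)} N_{K/F}(a_m)`. Applying `σ`
to the entries of `P` permutes its rows and columns cyclically, so the coefficients of `det P`,
hence those of `N(f)`, are fixed by `σ` and lie in `F`.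
-/

open Polynomial Fin.NatCast

namespace Matrix

variable {ι R : Type*} [Fintype ι] [DecidableEq ι] [CommRing R]

theorem natDegree_det_le_of_natDegree_le {A : Matrix ι ι R[X]} {d : ℕ}
    (h : ∀ i j, (A i j).natDegree ≤ d) : (det A).natDegree ≤ Fintype.card ι * d := by
  rw [det_apply']
  refine natDegree_sum_le_of_forall_le _ _ fun π _ => natDegree_mul_le.trans ?_
  rw [natDegree_intCast, zero_add]
  exact (natDegree_prod_le _ _).trans <| (Finset.sum_le_card_nsmul _ _ d fun i _ => h _ _).trans
    (by simp)

theorem coeff_det_of_natDegree_le {A : Matrix ι ι R[X]} {d : ℕ}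
    (h : ∀ i j, (A i j).natDegree ≤ d) :
    (det A).coeff (Fintype.card ι * d) = det (A.map (coeff · d)) := by
  simp only [det_apply', finsetSum_coeff, coeff_intCast_mul, map_apply]
  refine Finset.sum_congr rfl fun π _ => ?_
  rw [← Finset.card_univ, coeff_prod_of_natDegree_le _ _ _ fun i _ => h (π i) i]

theorem coeff_zero_det (A : Matrix ι ι R[X]) : (det A).coeff 0 = det (A.map (coeff · 0)) := by
  rw [← constantCoeff_apply, RingHom.map_det]
  rfl

end Matrix

theorem Equiv.Perm.sign_addRight_natCast (n s : ℕ) [NeZero n] :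
    Equiv.Perm.sign (Equiv.addRight (s : Fin n)) = (-1) ^ (s * (n - 1)) := by
  have : Equiv.addRight (s : Fin n) = finRotate n ^ s := by
    induction s with
    | zero => ext; simp
    | succ s ih => ext i; simp [pow_succ', ← ih, finRotate_apply, add_assoc]
  rw [this, map_pow, sign_finRotate, ← pow_mul, mul_comm]

theorem Polynomial.coeff_expand_mul_X_pow_eq_zero {K : Type*} [CommSemiring K] {n : ℕ} [NeZero n]
    (q : K[X]) (j : Fin n) {s : ℕ} (hs : (s : Fin n) ≠ j) :
    (expand K n q * X ^ (j : ℕ)).coeff s = 0 := by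
  rw [coeff_mul_X_pow', coeff_expand (Nat.pos_of_neZero n)]
  split_ifs with hjs hdvd
  · refine absurd ?_ hs
    rw [← Nat.sub_add_cancel hjs, Nat.cast_add, Fin.natCast_eq_zero.mpr hdvd, zero_add,
      Fin.cast_val_eq_self]
  all_goals rfl

section SkewPolynomial

variable {F K R : Type*} [CommSemiring F] [CommSemiring K] [Algebra F K] [Semiring R]
  {ι : K →+* R} {t : R} {σ : K ≃ₐ[F] K} {coeff : R →+ (ℕ →₀ K)}

noncomputable def coeffPolynomial (coeff : R →+ (ℕ →₀ K)) : R →+ K[X] :=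
  (Finsupp.liftAddHom fun s => (monomial s).toAddMonoidHom).comp coeff

theorem coeffPolynomial_apply (g : R) :
    coeffPolynomial coeff g = (coeff g).sum fun s a => monomial s a := by
  simp [coeffPolynomial, Finsupp.liftAddHom_apply]

theorem coeff_coeffPolynomial (g : R) (s : ℕ) : (coeffPolynomial coeff g).coeff s = coeff g s := by
  simp [coeffPolynomial_apply, Finsupp.sum, finsetSum_coeff, coeff_monomial]

theorem coeffPolynomial_mul_pow
    (hcoeff : ∀ (a : K) (i : ℕ), coeff (ι a * t ^ i) = Finsupp.single i a) (a : K) (i : ℕ) :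
    coeffPolynomial coeff (ι a * t ^ i) = monomial i a := by
  simp [coeffPolynomial, hcoeff]

theorem pow_mul_eq_mul_pow (hmul : ∀ a : K, t * ι a = ι (σ a) * t) (i : ℕ) (a : K) :
    t ^ i * ι a = ι ((σ ^ i) a) * t ^ i := by
  induction i generalizing a with
  | zero => simp
  | succ i ih =>
    rw [pow_succ, mul_assoc, hmul, ← mul_assoc, ih, mul_assoc, ← pow_succ, pow_succ σ,
      AlgEquiv.mul_apply]

theorem coeffPolynomial_pow_mul (hmul : ∀ a : K, t * ι a = ι (σ a) * t)
    (hcoeff : ∀ (a : K) (i : ℕ), coeff (ι a * t ^ i) = Finsupp.single i a)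
    (hrepr : ∀ g : R, (coeff g).sum (fun i a => ι a * t ^ i) = g) (g : R) (i : ℕ) :
    coeffPolynomial coeff (t ^ i * g) =
      X ^ i * (coeffPolynomial coeff g).map ((σ ^ i : K ≃ₐ[F] K) : K →+* K) := by
  conv_lhs => rw [← hrepr g]
  rw [coeffPolynomial_apply g, Finsupp.sum, Finsupp.sum, Finset.mul_sum, map_sum,
    Polynomial.map_sum, Finset.mul_sum]
  refine Finset.sum_congr rfl fun s _ => ?_
  rw [← mul_assoc, pow_mul_eq_mul_pow hmul, mul_assoc, ← pow_add, coeffPolynomial_mul_pow hcoeff,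
    map_monomial, X_pow_mul_monomial, add_comm]
  rfl

theorem coeffPolynomial_sum_mul_pow
    (hcoeff : ∀ (a : K) (i : ℕ), coeff (ι a * t ^ i) = Finsupp.single i a) (q : K[X]) (n j : ℕ) :
    coeffPolynomial coeff ((q.sum fun k a => ι a * t ^ (n * k)) * t ^ j) =
      expand K n q * X ^ j := by
  simp only [Polynomial.sum, Finset.sum_mul, map_sum, expand_eq_sum, mul_assoc, ← pow_add,
    coeffPolynomial_mul_pow hcoeff, ← pow_mul, C_mul_X_pow_eq_monomial,
    monomial_mul_X_pow]

theorem X_pow_mul_map_coeffPolynomial_eq_sum_expand (hmul : ∀ a : K, t * ι a = ι (σ a) * t)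
    (hcoeff : ∀ (a : K) (i : ℕ), coeff (ι a * t ^ i) = Finsupp.single i a)
    (hrepr : ∀ g : R, (coeff g).sum (fun i a => ι a * t ^ i) = g) {n : ℕ} {g : R}
    {M : Matrix (Fin n) (Fin n) K[X]}
    (hM : ∀ i : Fin n, t ^ (i : ℕ) * g =
      ∑ j : Fin n, ((M i j).sum fun k a => ι a * t ^ (n * k)) * t ^ (j : ℕ)) (i : Fin n) :
    X ^ (i : ℕ) * (coeffPolynomial coeff g).map ((σ ^ (i : ℕ) : K ≃ₐ[F] K) : K →+* K) =
      ∑ j, expand K n (M i j) * X ^ (j : ℕ) := by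
  rw [← coeffPolynomial_pow_mul hmul hcoeff hrepr, hM, map_sum]
  simp only [coeffPolynomial_sum_mul_pow hcoeff]

end SkewPolynomial

section Galois

variable {F K : Type*} [Field F] [Field K] [Algebra F K] [IsGalois F K] {σ : K ≃ₐ[F] K}

theorem algebraMap_norm_eq_prod_range_orderOf [FiniteDimensional F K]
    (hσ : ∀ τ, τ ∈ Subgroup.zpowers σ) (y : K) :
    algebraMap F K (Algebra.norm F y) = ∏ i ∈ Finset.range (orderOf σ), (σ ^ i) y := by
  classical
  rw [Algebra.norm_eq_prod_automorphisms, ← IsCyclic.image_range_orderOf hσ,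
    Finset.prod_image fun i hi j hj hij =>
      pow_injOn_Iio_orderOf (by simpa using hi) (by simpa using hj) hij]

theorem mem_range_algebraMap_of_apply_eq_self (hσ : ∀ τ, τ ∈ Subgroup.zpowers σ) {x : K}
    (hx : σ x = x) : x ∈ (algebraMap F K).range := by
  refine (InfiniteGalois.mem_range_algebraMap_iff_fixed x).mpr fun τ => ?_
  exact (Subgroup.zpowers_le (H := MulAction.stabilizer (K ≃ₐ[F] K) x)).mpr hx (hσ τ)

end Galois

section TwistedCirculant

variable {F K : Type*} [CommSemiring F] [CommRing K] [Algebra F K] (σ : K ≃ₐ[F] K)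
  (n : ℕ) [NeZero n]

noncomputable def twistedCirculant (p : K[X]) : Matrix (Fin n) (Fin n) K[X] :=
  Matrix.of fun i j =>
    ∑ s ∈ p.support with ((s : ℕ) : Fin n) + i = j, monomial s ((σ ^ (i : ℕ)) (p.coeff s))

variable {σ n}

theorem coeff_twistedCirculant (p : K[X]) (i j : Fin n) (s : ℕ) :
    (twistedCirculant σ n p i j).coeff s =
      if (s : Fin n) + i = j then (σ ^ (i : ℕ)) (p.coeff s) else 0 := by
  simp only [twistedCirculant, Matrix.of_apply, finsetSum_coeff, Finset.sum_filter]
  rw [Finset.sum_eq_single s (fun b _ hb => by split_ifs <;> simp [coeff_monomial, hb])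
    (fun hs => by simp [notMem_support_iff.mp hs])]
  split_ifs <;> simp

theorem natDegree_twistedCirculant_le (p : K[X]) (i j : Fin n) :
    (twistedCirculant σ n p i j).natDegree ≤ p.natDegree := by
  refine natDegree_le_iff_coeff_eq_zero.mpr fun s hs => ?_
  simp [coeff_twistedCirculant, coeff_eq_zero_of_natDegree_lt hs]

theorem twistedCirculant_map_coeff (p : K[X]) (s : ℕ) :
    (twistedCirculant σ n p).map (coeff · s) =
      (Matrix.diagonal fun i : Fin n => (σ ^ (i : ℕ)) (p.coeff s)).submatrix id
        (Equiv.addRight (s : Fin n)).symm := by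
  ext i j
  simp [coeff_twistedCirculant, Matrix.diagonal_apply, eq_add_neg_iff_add_eq, add_comm,
    -AlgEquiv.coe_pow]

theorem det_twistedCirculant_map_coeff (p : K[X]) (s : ℕ) :
    ((twistedCirculant σ n p).map (coeff · s)).det =
      (-1) ^ (s * (n - 1)) * ∏ i : Fin n, (σ ^ (i : ℕ)) (p.coeff s) := by
  rw [twistedCirculant_map_coeff, Matrix.det_permute', Matrix.det_diagonal, Equiv.Perm.sign_symm,
    Equiv.Perm.sign_addRight_natCast]
  push_cast
  rfl

theorem natDegree_det_twistedCirculant_le (p : K[X]) :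
    (twistedCirculant σ n p).det.natDegree ≤ n * p.natDegree := by
  simpa using
    Matrix.natDegree_det_le_of_natDegree_le (natDegree_twistedCirculant_le (σ := σ) (n := n) p)

theorem coeff_zero_det_twistedCirculant (p : K[X]) :
    (twistedCirculant σ n p).det.coeff 0 = ∏ i : Fin n, (σ ^ (i : ℕ)) (p.coeff 0) := by
  rw [Matrix.coeff_zero_det, det_twistedCirculant_map_coeff, zero_mul, pow_zero, one_mul]

theorem coeff_det_twistedCirculant_natDegree (p : K[X]) :
    (twistedCirculant σ n p).det.coeff (n * p.natDegree) =
      (-1) ^ (p.natDegree * (n - 1)) * ∏ i : Fin n, (σ ^ (i : ℕ)) p.leadingCoeff := by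
  have h := Matrix.coeff_det_of_natDegree_le (natDegree_twistedCirculant_le (σ := σ) (n := n) p)
  rw [Fintype.card_fin] at h
  rw [h, det_twistedCirculant_map_coeff, leadingCoeff]

theorem map_twistedCirculant (hσ : σ ^ n = 1) (p : K[X]) :
    (twistedCirculant σ n p).map (map (σ : K →+* K)) =
      (twistedCirculant σ n p).submatrix (Equiv.addRight 1) (Equiv.addRight 1) := by
  ext i j s
  simp only [Matrix.map_apply, Matrix.submatrix_apply, Equiv.coe_addRight, coeff_map,
    coeff_twistedCirculant, ← add_assoc, add_left_inj]
  have hval : ((i + 1 : Fin n) : ℕ) = ((i : ℕ) + 1) % n := by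
    rw [Fin.val_add, Fin.val_one', Nat.add_mod_mod]
  split_ifs
  · rw [hval, ← pow_eq_pow_mod _ hσ, pow_succ', AlgEquiv.mul_apply]
    rfl
  · exact map_zero _

theorem map_det_twistedCirculant (hσ : σ ^ n = 1) (p : K[X]) :
    (twistedCirculant σ n p).det.map (σ : K →+* K) = (twistedCirculant σ n p).det := by
  rw [← coe_mapRingHom, RingHom.map_det, RingHom.mapMatrix_apply, coe_mapRingHom,
    map_twistedCirculant hσ, Matrix.det_submatrix_equiv_self]

theorem X_pow_mul_twistedCirculant {p : K[X]} {M : Matrix (Fin n) (Fin n) K[X]}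
    (hM : ∀ i : Fin n, X ^ (i : ℕ) * p.map ((σ ^ (i : ℕ) : K ≃ₐ[F] K) : K →+* K) =
      ∑ j, expand K n (M i j) * X ^ (j : ℕ)) (i j : Fin n) :
    X ^ (i : ℕ) * twistedCirculant σ n p i j = expand K n (M i j) * X ^ (j : ℕ) := by
  have hcast {s : ℕ} (h : (i : ℕ) ≤ s) : ((s - i : ℕ) : Fin n) + i = s := by
    have : ((s - i : ℕ) : Fin n) + ((i : ℕ) : Fin n) = s := by
      rw [← Nat.cast_add, Nat.sub_add_cancel h]
    rwa [Fin.cast_val_eq_self] at this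
  ext s
  rw [coeff_X_pow_mul']
  by_cases hs : (s : Fin n) = j
  · have hcoeff := congrArg (coeff · s) (hM i)
    simp only [finsetSum_coeff] at hcoeff
    rw [Finset.sum_eq_single j (fun j' _ hj' => coeff_expand_mul_X_pow_eq_zero _ _ (hs ▸ hj'.symm))
      (by simp), coeff_X_pow_mul'] at hcoeff
    rw [← hcoeff]
    split_ifs with his
    · rw [coeff_twistedCirculant, coeff_map, if_pos (by rw [hcast his, hs])]
      rfl
    · rfl
  · rw [coeff_expand_mul_X_pow_eq_zero _ _ hs]
    split_ifs with his
    · rw [coeff_twistedCirculant, if_neg (by rwa [hcast his])]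
    · rfl

theorem expand_det_eq_det_twistedCirculant [IsDomain K] {p : K[X]}
    {M : Matrix (Fin n) (Fin n) K[X]}
    (hM : ∀ i : Fin n, X ^ (i : ℕ) * p.map ((σ ^ (i : ℕ) : K ≃ₐ[F] K) : K →+* K) =
      ∑ j, expand K n (M i j) * X ^ (j : ℕ)) :
    expand K n M.det = (twistedCirculant σ n p).det := by
  have hmat : M.map (expand K n) * Matrix.diagonal (fun j : Fin n => X ^ (j : ℕ)) =
      Matrix.diagonal (fun i : Fin n => X ^ (i : ℕ)) * twistedCirculant σ n p := by
    ext1 i j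
    rw [Matrix.mul_diagonal, Matrix.diagonal_mul, Matrix.map_apply, X_pow_mul_twistedCirculant hM]
  have hdet := congrArg Matrix.det hmat
  rw [Matrix.det_mul, Matrix.det_mul, Matrix.det_diagonal, mul_comm (∏ i, _)] at hdet
  rw [AlgHom.map_det, AlgHom.mapMatrix_apply]
  exact mul_right_cancel₀ (Finset.prod_ne_zero_iff.mpr fun i _ => pow_ne_zero _ X_ne_zero) hdet

end TwistedCirculant

/-- For `f = a₀ + a₁t + ⋯ + a_m t^m ∈ K[t;σ]` of degree `m`, the reduced norm
`N(f)` (the determinant of the left regular representation on the `K(x)`-basis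
`1, t, …, t^{n-1}`, `x = t^n`) lies in `F[x]`, has constant coefficient
`N_{K/F}(a₀)`, leading coefficient `(−1)^{m(n−1)} N_{K/F}(a_m)`, and degree `m`. -/
theorem reduced_norm_of_skew_polynomial
    (F K : Type) [Field F] [Field K] [Algebra F K] [IsGalois F K]
    (n : ℕ) (hn : 0 < n) (hdim : Module.finrank F K = n)
    (σ : K ≃ₐ[F] K) (hσgen : ∀ τ : K ≃ₐ[F] K, τ ∈ Subgroup.zpowers σ)
    (R : Type) [Ring R] (ι : K →+* R) (t : R)
    (hmul : ∀ a : K, t * ι a = ι (σ a) * t)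
    (coeff : R →+ (ℕ →₀ K))
    (hcoeff : ∀ (a : K) (i : ℕ), coeff (ι a * t ^ i) = Finsupp.single i a)
    (hrepr : ∀ x : R, (coeff x).sum (fun i a => ι a * t ^ i) = x)
    -- the left regular representation ρ with respect to the basis 1, t, …, t^{n-1}
    -- over K[x] with x = t^n, and the reduced norm N = det ∘ ρ:
    (ρ : R → Matrix (Fin n) (Fin n) (Polynomial K))
    (hρ : ∀ (g : R) (i : Fin n), t ^ (i : ℕ) * g =
      ∑ j : Fin n, ((ρ g i j).sum fun k a => ι a * t ^ (n * k)) * t ^ (j : ℕ))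
    (N : R → Polynomial K) (hN : ∀ g : R, N g = (ρ g).det)
    (f : R) (m : ℕ) (hdeg : coeff f m ≠ 0 ∧ ∀ i : ℕ, m < i → coeff f i = 0) :
    (∀ k : ℕ, (N f).coeff k ∈ (algebraMap F K).range) ∧
    (N f).coeff 0 = algebraMap F K (Algebra.norm F (coeff f 0)) ∧
    (N f).natDegree = m ∧
    (N f).coeff m = (-1) ^ (m * (n - 1)) * algebraMap F K (Algebra.norm F (coeff f m)) := by
  have : FiniteDimensional F K := Module.finite_of_finrank_pos (hdim ▸ hn)
  have : NeZero n := ⟨hn.ne'⟩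
  have horder : orderOf σ = n := by
    rw [orderOf_eq_card_of_forall_mem_zpowers hσgen, IsGalois.card_aut_eq_finrank, hdim]
  have hnorm (y : K) : algebraMap F K (Algebra.norm F y) = ∏ i : Fin n, (σ ^ (i : ℕ)) y := by
    rw [algebraMap_norm_eq_prod_range_orderOf hσgen, horder, ← Fin.prod_univ_eq_prod_range]
  set p := coeffPolynomial coeff f
  have hp : p.natDegree = m := natDegree_eq_of_le_of_coeff_ne_zero
    (natDegree_le_iff_coeff_eq_zero.mpr fun i hi => (coeff_coeffPolynomial f i).trans (hdeg.2 i hi))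
    ((coeff_coeffPolynomial f m).trans_ne hdeg.1)
  have hexpand : expand K n (N f) = (twistedCirculant σ n p).det := by
    rw [hN]
    exact expand_det_eq_det_twistedCirculant
      (X_pow_mul_map_coeffPolynomial_eq_sum_expand hmul hcoeff hrepr (hρ f))
  have hcoeffN (k : ℕ) : (N f).coeff k = (twistedCirculant σ n p).det.coeff (n * k) := by
    rw [← hexpand, coeff_expand_mul' hn]
  have htop : (N f).coeff m =
      (-1) ^ (m * (n - 1)) * algebraMap F K (Algebra.norm F (coeff f m)) := by
    rw [hcoeffN, ← hp, coeff_det_twistedCirculant_natDegree, hnorm, leadingCoeff,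
      coeff_coeffPolynomial]
  have hfix : (N f).map (σ : K →+* K) = N f := expand_injective hn <| by
    rw [← map_expand, hexpand, map_det_twistedCirculant (horder ▸ pow_orderOf_eq_one σ)]
  refine ⟨fun k => mem_range_algebraMap_of_apply_eq_self hσgen ?_, ?_, ?_, htop⟩
  · simpa using congrArg (Polynomial.coeff · k) hfix
  · rw [hcoeffN, mul_zero, coeff_zero_det_twistedCirculant, hnorm, coeff_coeffPolynomial]
  · refine natDegree_eq_of_le_of_coeff_ne_zero ?_ (htop ▸ mul_ne_zero (by simp) ?_)
    · refine Nat.le_of_mul_le_mul_right ?_ hn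
      rw [← natDegree_expand, hexpand, mul_comm, ← hp]
      exact natDegree_det_twistedCirculant_le p
    · simpa [Algebra.norm_ne_zero_iff] using hdeg.1
end

section
/- Let K/F be a finite cyclic Galois extension of degree n with Gal(K/F)=⟨σ⟩, R = K[t;σ], x = t^n, and N the reduced norm of K(t;σ) over F(x) as above. Then for every f ∈ R one has N(f) ∈ F[x], and f right-divides N(f) in R: there exists f^♯ ∈ R with N(f) = f^♯ · f = f · f^♯. -/
/-!
Reading off coordinates in the `K[x]`-basis `1, t, …, t^(n-1)` is injective, so `g ↦ ρ g` is an
injective ring homomorphism `R → Mₙ(K[x])`. Since `t * g = g^σ * t`, conjugation by `ρ t` applies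
`σ` to the entries of `ρ g`; as `(ρ t)^n = x • 1`, `ρ t` has nonzero determinant, so `det (ρ g)` is
`σ`-invariant and its coefficients lie in `F`. Row `0` of the adjugate of `ρ f` gives `f^♯` with
`f^♯ * f = N(f)`. As `N(f)` is central, `ρ f^♯ * ρ f = N(f) • 1`, which forces `ρ f^♯ = adj (ρ f)`
when `N(f) ≠ 0`, and then `ρ (f * f^♯) = N(f) • 1` gives `f * f^♯ = N(f)`.
-/

open Polynomial Matrix

theorem IsGalois.mem_range_algebraMap_of_generator_fixes {F K : Type*} [Field F] [Field K]
    [Algebra F K] [IsGalois F K] [FiniteDimensional F K] {σ : K ≃ₐ[F] K}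
    (hσ : ∀ τ : K ≃ₐ[F] K, τ ∈ Subgroup.zpowers σ) {a : K} (ha : σ a = a) :
    a ∈ (algebraMap F K).range := by
  have hstab : Subgroup.zpowers σ ≤ MulAction.stabilizer (K ≃ₐ[F] K) a :=
    Subgroup.zpowers_le.mpr ha
  exact (IsGalois.mem_range_algebraMap_iff_fixed a).mpr fun τ => hstab (hσ τ)

theorem Matrix.eq_adjugate_of_mul_eq_det_smul {m α : Type*} [Fintype m] [DecidableEq m]
    [CommRing α] [IsDomain α] {A B : Matrix m m α} (h : B * A = A.det • 1) (hA : A.det ≠ 0) :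
    B = A.adjugate := by
  refine smul_right_injective _ hA ?_
  calc A.det • B = B * (A * A.adjugate) := by rw [mul_adjugate, Matrix.mul_smul, Matrix.mul_one]
    _ = A.det • A.adjugate := by rw [← Matrix.mul_assoc, h, smul_mul, Matrix.one_mul]

theorem Matrix.smul_one_apply_row {m α : Type*} [DecidableEq m] [Semiring α] (a : α)
    (i : m) : (a • (1 : Matrix m m α)) i = Pi.single i a := by
  rw [smul_one_eq_diagonal]
  exact row_diagonal (fun _ => a) i

namespace CyclicSkewPoly

section Coordinates

variable {K R : Type*} [CommRing K] [Ring R] (ι : K →+* R) (t : R) (n : ℕ)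

theorem pow_mul_eq_iterate_mul_pow {σ : K → K} (hmul : ∀ a, t * ι a = ι (σ a) * t) (k : ℕ) (a : K) :
    t ^ k * ι a = ι (σ^[k] a) * t ^ k := by
  induction k generalizing a with
  | zero => simp
  | succ k ih =>
    rw [pow_succ, mul_assoc, hmul, ← mul_assoc, ih, Function.iterate_succ_apply, mul_assoc]

variable (hcomm : ∀ a, Commute (ι a) (t ^ n))

noncomputable def evalPow : K[X] →+* R := eval₂RingHom' ι (t ^ n) hcomm

theorem sum_eq_evalPow (p : K[X]) :
    (p.sum fun k a => ι a * t ^ (n * k)) = evalPow ι t n hcomm p := by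
  simp [evalPow, eval₂RingHom', eval₂_eq_sum, pow_mul]

theorem evalPow_monomial (k : ℕ) (a : K) :
    evalPow ι t n hcomm (monomial k a) = ι a * t ^ (n * k) := by
  simp [evalPow, eval₂RingHom', pow_mul]

theorem evalPow_X : evalPow ι t n hcomm X = t ^ n := eval₂_X _ _

theorem mul_evalPow {σ : K →+* K} (hmul : ∀ a, t * ι a = ι (σ a) * t) (p : K[X]) :
    t * evalPow ι t n hcomm p = evalPow ι t n hcomm (p.map σ) * t := by
  induction p using Polynomial.induction_on' with
  | add p q hp hq => rw [map_add, mul_add, hp, hq, Polynomial.map_add, map_add, add_mul]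
  | monomial k a =>
    rw [map_monomial, evalPow_monomial, evalPow_monomial, ← mul_assoc, hmul, mul_assoc,
      (Commute.self_pow t _).eq, mul_assoc]

theorem coeff_evalPow_mul_pow (coeff : R →+ (ℕ →₀ K))
    (hcoeff : ∀ a i, coeff (ι a * t ^ i) = Finsupp.single i a) (p : K[X]) (j : ℕ) :
    coeff (evalPow ι t n hcomm p * t ^ j) =
      Finsupp.mapDomain (fun k => n * k + j) p.toFinsupp.coeff := by
  induction p using Polynomial.induction_on' with
  | add p q hp hq =>
    rw [map_add, add_mul, map_add, hp, hq, toFinsupp_add, AddMonoidAlgebra.coeff_add,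
      Finsupp.mapDomain_add]
  | monomial k a =>
    rw [evalPow_monomial, mul_assoc, ← pow_add, hcoeff, toFinsupp_monomial,
      AddMonoidAlgebra.coeff_single, Finsupp.mapDomain_single]

noncomputable def ofRow (v : Fin n → K[X]) : R := ∑ j, evalPow ι t n hcomm (v j) * t ^ (j : ℕ)

theorem ofRow_single (i : Fin n) (p : K[X]) :
    ofRow ι t n hcomm (Pi.single i p) = evalPow ι t n hcomm p * t ^ (i : ℕ) := by
  rw [ofRow, Finset.sum_eq_single i] <;> simp_all

theorem ofRow_vecMul {M : Matrix (Fin n) (Fin n) K[X]} {g : R}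
    (hM : ∀ i, ofRow ι t n hcomm (M i) = t ^ (i : ℕ) * g) (v : Fin n → K[X]) :
    ofRow ι t n hcomm (v ᵥ* M) = ofRow ι t n hcomm v * g := by
  simp only [ofRow, Matrix.vecMul, dotProduct, map_sum, map_mul, Finset.sum_mul, mul_assoc]
  rw [Finset.sum_comm]
  refine Finset.sum_congr rfl fun k _ => ?_
  rw [← Finset.mul_sum, ← ofRow, hM]

theorem mul_ofRow {σ : K →+* K} (hmul : ∀ a, t * ι a = ι (σ a) * t) (v : Fin n → K[X]) :
    t * ofRow ι t n hcomm v = ofRow ι t n hcomm (fun j => (v j).map σ) * t := by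
  simp only [ofRow, Finset.mul_sum, Finset.sum_mul, ← mul_assoc, mul_evalPow ι t n hcomm hmul]
  simp only [mul_assoc, pow_mul_comm']

theorem coeff_ofRow (coeff : R →+ (ℕ →₀ K))
    (hcoeff : ∀ a i, coeff (ι a * t ^ i) = Finsupp.single i a) (v : Fin n → K[X]) (k : ℕ)
    (j : Fin n) : coeff (ofRow ι t n hcomm v) (n * k + j) = (v j).coeff k := by
  have hinj : Function.Injective fun k' => n * k' + j :=
    fun a b h => Nat.eq_of_mul_eq_mul_left j.pos (by simpa using h)
  rw [ofRow, map_sum, Finsupp.finsetSum_apply, Finset.sum_eq_single j]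
  · rw [coeff_evalPow_mul_pow ι t n hcomm coeff hcoeff, Finsupp.mapDomain_apply hinj,
      toFinsupp_apply]
  · intro j' _ hj'
    rw [coeff_evalPow_mul_pow ι t n hcomm coeff hcoeff, Finsupp.mapDomain_of_notMem_range]
    rintro ⟨k', hk'⟩
    have hmod := congrArg (· % n) hk'
    simp only [Nat.mul_add_mod, Nat.mod_eq_of_lt j.isLt, Nat.mod_eq_of_lt j'.isLt] at hmod
    exact hj' (Fin.ext hmod)
  · simp

theorem ofRow_injective (coeff : R →+ (ℕ →₀ K))
    (hcoeff : ∀ a i, coeff (ι a * t ^ i) = Finsupp.single i a) :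
    Function.Injective (ofRow ι t n hcomm) := fun v w h =>
  funext fun j => Polynomial.ext fun k => by
    rw [← coeff_ofRow ι t n hcomm coeff hcoeff, h, coeff_ofRow ι t n hcomm coeff hcoeff]

def IsLeftRegularRep (ρ : R → Matrix (Fin n) (Fin n) K[X]) : Prop :=
  ∀ g (i : Fin n), ofRow ι t n hcomm (ρ g i) = t ^ (i : ℕ) * g

end Coordinates

namespace IsLeftRegularRep

variable {K R : Type*} [CommRing K] [Ring R] {ι : K →+* R} {t : R} {n : ℕ}
  {hcomm : ∀ a, Commute (ι a) (t ^ n)} {ρ : R → Matrix (Fin n) (Fin n) K[X]}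

theorem map_mul (hρ : IsLeftRegularRep ι t n hcomm ρ)
    (hinj : Function.Injective (ofRow ι t n hcomm)) (g h : R) : ρ (g * h) = ρ g * ρ h := by
  funext i
  apply hinj
  rw [hρ, mul_apply_eq_vecMul, ofRow_vecMul ι t n hcomm (hρ h), hρ, mul_assoc]

theorem map_evalPow (hρ : IsLeftRegularRep ι t n hcomm ρ)
    (hinj : Function.Injective (ofRow ι t n hcomm)) {p : K[X]}
    (hp : Commute t (evalPow ι t n hcomm p)) : ρ (evalPow ι t n hcomm p) = p • 1 := by
  funext i
  apply hinj
  rw [hρ, smul_one_apply_row, ofRow_single, (hp.pow_left _).eq]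

theorem map_one (hρ : IsLeftRegularRep ι t n hcomm ρ)
    (hinj : Function.Injective (ofRow ι t n hcomm)) : ρ 1 = 1 := by
  simpa using hρ.map_evalPow hinj (p := 1) (by simp)

theorem map_pow (hρ : IsLeftRegularRep ι t n hcomm ρ)
    (hinj : Function.Injective (ofRow ι t n hcomm)) (g : R) (k : ℕ) : ρ (g ^ k) = ρ g ^ k := by
  induction k with
  | zero => rw [pow_zero, pow_zero, hρ.map_one hinj]
  | succ k ih => rw [pow_succ, hρ.map_mul hinj, ih, pow_succ]

theorem injective [NeZero n] (hρ : IsLeftRegularRep ι t n hcomm ρ) : Function.Injective ρ :=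
  fun g h e => by simpa using (hρ g 0).symm.trans ((congrArg _ (congrFun e 0)).trans (hρ h 0))

theorem det_ne_zero [IsDomain K] [NeZero n] (hρ : IsLeftRegularRep ι t n hcomm ρ)
    (hinj : Function.Injective (ofRow ι t n hcomm)) : (ρ t).det ≠ 0 := by
  have hX : (ρ t).det ^ n = X ^ n := by
    rw [← det_pow, ← hρ.map_pow hinj, ← evalPow_X ι t n hcomm,
      hρ.map_evalPow hinj (by rw [evalPow_X]; exact Commute.self_pow t n), det_smul, det_one,
      mul_one, Fintype.card_fin]
  exact (pow_ne_zero_iff (NeZero.ne n)).mp (hX ▸ pow_ne_zero n X_ne_zero)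

theorem map_t_mul_eq {σ : K →+* K} (hρ : IsLeftRegularRep ι t n hcomm ρ)
    (hinj : Function.Injective (ofRow ι t n hcomm)) (hmul : ∀ a, t * ι a = ι (σ a) * t) (g : R) :
    ρ t * ρ g = (ρ g).map (Polynomial.map σ) * ρ t := by
  rw [← hρ.map_mul hinj]
  funext i
  apply hinj
  rw [hρ, mul_apply_eq_vecMul, ofRow_vecMul ι t n hcomm (hρ t), ← mul_assoc,
    ← (Commute.self_pow t _).eq, mul_assoc, ← hρ,
    mul_ofRow ι t n hcomm hmul]
  rfl

theorem map_det {σ : K →+* K} [IsDomain K] [NeZero n] (hρ : IsLeftRegularRep ι t n hcomm ρ)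
    (hinj : Function.Injective (ofRow ι t n hcomm)) (hmul : ∀ a, t * ι a = ι (σ a) * t) (g : R) :
    (ρ g).det.map σ = (ρ g).det := by
  refine mul_right_cancel₀ (hρ.det_ne_zero hinj) ?_
  calc (ρ g).det.map σ * (ρ t).det = ((ρ g).map (Polynomial.map σ) * ρ t).det := by
        rw [det_mul, ← coe_mapRingHom, RingHom.map_det]
        rfl
    _ = (ρ g).det * (ρ t).det := by rw [← hρ.map_t_mul_eq hinj hmul, det_mul, mul_comm]

theorem ofRow_adjugate_mul [NeZero n] (hρ : IsLeftRegularRep ι t n hcomm ρ) (g : R) :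
    ofRow ι t n hcomm ((ρ g).adjugate 0) * g = evalPow ι t n hcomm (ρ g).det := by
  rw [← ofRow_vecMul ι t n hcomm (hρ g), ← mul_apply_eq_vecMul, adjugate_mul,
    smul_one_apply_row, ofRow_single, Fin.val_zero, pow_zero, mul_one]

theorem mul_ofRow_adjugate [IsDomain K] [NeZero n] (hρ : IsLeftRegularRep ι t n hcomm ρ)
    (hinj : Function.Injective (ofRow ι t n hcomm)) {g : R} (hdet : (ρ g).det ≠ 0)
    (hcentral : Commute t (evalPow ι t n hcomm (ρ g).det)) :
    g * ofRow ι t n hcomm ((ρ g).adjugate 0) = evalPow ι t n hcomm (ρ g).det := by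
  have hadj : ρ (ofRow ι t n hcomm ((ρ g).adjugate 0)) = (ρ g).adjugate := by
    refine eq_adjugate_of_mul_eq_det_smul ?_ hdet
    rw [← hρ.map_mul hinj, hρ.ofRow_adjugate_mul, hρ.map_evalPow hinj hcentral]
  apply hρ.injective
  rw [hρ.map_mul hinj, hadj, mul_adjugate, hρ.map_evalPow hinj hcentral]

end IsLeftRegularRep

end CyclicSkewPoly

open CyclicSkewPoly

theorem skew_polynomial_divides_its_norm_general
    (F K : Type) [Field F] [Field K] [Algebra F K] [IsGalois F K]
    (n : ℕ) (hn : 0 < n) (hdim : Module.finrank F K = n)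
    (σ : K ≃ₐ[F] K) (hσgen : ∀ τ : K ≃ₐ[F] K, τ ∈ Subgroup.zpowers σ)
    (R : Type) [Ring R] (ι : K →+* R) (t : R)
    (hmul : ∀ a : K, t * ι a = ι (σ a) * t)
    (coeff : R →+ (ℕ →₀ K))
    (hcoeff : ∀ (a : K) (i : ℕ), coeff (ι a * t ^ i) = Finsupp.single i a)
    (ρ : R → Matrix (Fin n) (Fin n) (Polynomial K))
    (hρ : ∀ (g : R) (i : Fin n), t ^ (i : ℕ) * g =
      ∑ j : Fin n, ((ρ g i j).sum fun k a => ι a * t ^ (n * k)) * t ^ (j : ℕ))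
    (N : R → Polynomial K) (hN : ∀ g : R, N g = (ρ g).det)
    (f : R) :
    (∀ k : ℕ, (N f).coeff k ∈ (algebraMap F K).range) ∧
    ∃ fsharp : R,
      ((N f).sum fun k a => ι a * t ^ (n * k)) = fsharp * f ∧
      ((N f).sum fun k a => ι a * t ^ (n * k)) = f * fsharp := by
  have : FiniteDimensional F K := Module.finite_of_finrank_pos (hdim ▸ hn)
  have : NeZero n := ⟨hn.ne'⟩
  have hσn : (⇑σ)^[n] = id := by
    rw [← AlgEquiv.coe_pow, ← hdim, ← IsGalois.card_aut_eq_finrank, pow_card_eq_one']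
    rfl
  have hcomm : ∀ a, Commute (ι a) (t ^ n) := fun a => by
    have h := pow_mul_eq_iterate_mul_pow ι t hmul n a
    rw [hσn, id] at h
    exact h.symm
  have hinj := ofRow_injective ι t n hcomm coeff hcoeff
  have hreg : IsLeftRegularRep ι t n hcomm ρ := fun g i => by
    simpa only [ofRow, sum_eq_evalPow ι t n hcomm] using (hρ g i).symm
  have hfix : (N f).map (σ : K →+* K) = N f := hN f ▸ hreg.map_det hinj hmul f
  refine ⟨fun k => IsGalois.mem_range_algebraMap_of_generator_fixes hσgen ?_, ?_⟩
  · simpa using congrArg (fun p => p.coeff k) hfix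
  have hcentral : Commute t (evalPow ι t n hcomm (ρ f).det) := by
    rw [← hN, Commute, SemiconjBy, mul_evalPow ι t n hcomm (σ := σ) hmul, hfix]
  simp only [sum_eq_evalPow ι t n hcomm, hN]
  by_cases hdet : (ρ f).det = 0
  · exact ⟨0, by simp [hdet]⟩
  · exact ⟨_, (hreg.ofRow_adjugate_mul f).symm, (hreg.mul_ofRow_adjugate hinj hdet hcentral).symm⟩

/-- For every `f ∈ R = K[t;σ]`, the reduced norm `N(f)` lies in `F[x]` and `f`
divides `N(f)` in `R`: there is `f^♯ ∈ R` with `N(f) = f^♯·f = f·f^♯`. -/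
theorem skew_polynomial_divides_its_norm
    (F K : Type) [Field F] [Field K] [Algebra F K] [IsGalois F K]
    (n : ℕ) (hn : 0 < n) (hdim : Module.finrank F K = n)
    (σ : K ≃ₐ[F] K) (hσgen : ∀ τ : K ≃ₐ[F] K, τ ∈ Subgroup.zpowers σ)
    (R : Type) [Ring R] (ι : K →+* R) (t : R)
    (hmul : ∀ a : K, t * ι a = ι (σ a) * t)
    (coeff : R →+ (ℕ →₀ K))
    (hcoeff : ∀ (a : K) (i : ℕ), coeff (ι a * t ^ i) = Finsupp.single i a)
    (hrepr : ∀ x : R, (coeff x).sum (fun i a => ι a * t ^ i) = x)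
    (ρ : R → Matrix (Fin n) (Fin n) (Polynomial K))
    (hρ : ∀ (g : R) (i : Fin n), t ^ (i : ℕ) * g =
      ∑ j : Fin n, ((ρ g i j).sum fun k a => ι a * t ^ (n * k)) * t ^ (j : ℕ))
    (N : R → Polynomial K) (hN : ∀ g : R, N g = (ρ g).det)
    (f : R) :
    (∀ k : ℕ, (N f).coeff k ∈ (algebraMap F K).range) ∧
    ∃ fsharp : R,
      ((N f).sum fun k a => ι a * t ^ (n * k)) = fsharp * f ∧
      ((N f).sum fun k a => ι a * t ^ (n * k)) = f * fsharp :=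
  skew_polynomial_divides_its_norm_general F K n hn hdim σ hσgen R ι t hmul coeff hcoeff ρ hρ N hN f
end

section
/- Let K/F be cyclic Galois of degree n with Gal(K/F)=⟨σ⟩, R = K[t;σ], and N the reduced norm of K(t;σ) over F(x), x = t^n. If f ∈ R and N(f) is irreducible in F[x], then f is irreducible in R. -/
/-!
Let `ρ g` be the matrix of right multiplication by `g` on `R`, viewed as a free left
`K[tⁿ]`-module with basis `1, t, …, tⁿ⁻¹`; the norm is `det ∘ ρ`, hence multiplicative.
Since `t (∑ Pⱼ tʲ) = (∑ Pⱼ^σ tʲ) t`, we get `ρ(g)^σ ρ(t) = ρ(t) ρ(g)`, and `det ρ(t) ≠ 0`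
because `ρ(tⁿ) = X • 1`; so `N g` is `σ`-invariant and has coefficients in `F`. If `N g` is a
unit, the first row of `ρ(g)⁻¹` gives a left inverse of `g`, which is two-sided because `ρ` is
injective. A factorization `f = a b` thus gives `q = N(a) N(b)` in `F[X]`, and irreducibility
of `q` makes `a` or `b` a unit.
-/

open Polynomial Matrix

namespace SkewNorm

theorem irreducible_of_irreducible_of_map_eq {M A B : Type*} [Monoid M] [Monoid A] [Monoid B]
    (φ : M →* B) (ψ : A →* B) (hψ : Function.Injective ψ) (hrange : ∀ g, φ g ∈ Set.range ψ)
    (hφ : ∀ g, IsUnit (φ g) → IsUnit g) (hψunit : ∀ a, IsUnit (ψ a) → IsUnit a)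
    {f : M} {q : A} (hq : Irreducible q) (hqf : ψ q = φ f) : Irreducible f := by
  refine ⟨fun hf => hq.not_isUnit (hψunit q (hqf ▸ hf.map φ)), fun a b hab => ?_⟩
  obtain ⟨qa, hqa⟩ := hrange a
  obtain ⟨qb, hqb⟩ := hrange b
  have hsplit : q = qa * qb := hψ (by rw [map_mul, hqa, hqb, hqf, hab, map_mul])
  refine (hq.isUnit_or_isUnit hsplit).imp (fun h => hφ a ?_) (fun h => hφ b ?_)
  · exact hqa ▸ h.map ψ
  · exact hqb ▸ h.map ψ

theorem pow_mul_eq_of_mul_eq {α M : Type*} [Monoid M] {ι : α → M} {s : α → α} {t : M}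
    (hmul : ∀ a, t * ι a = ι (s a) * t) (m : ℕ) (a : α) :
    t ^ m * ι a = ι (s^[m] a) * t ^ m := by
  induction m generalizing a with
  | zero => simp
  | succ m ih =>
    rw [pow_succ, mul_assoc, hmul, ← mul_assoc, ih, mul_assoc, ← pow_succ,
      Function.iterate_succ_apply]

theorem mul_add_eq_mul_add_iff {n k m : ℕ} {j j' : Fin n} :
    n * k + j = n * m + j' ↔ k = m ∧ j = j' := by
  refine ⟨fun h => ?_, by rintro ⟨rfl, rfl⟩; rfl⟩
  have hj : j = j' := Fin.ext <| by
    simpa [Nat.mul_add_mod, Nat.mod_eq_of_lt] using congrArg (· % n) h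
  subst hj
  exact ⟨Nat.eq_of_mul_eq_mul_left j.pos (by omega), rfl⟩

variable {K R : Type} [Field K] [Ring R]

def ofCoords {n : ℕ} (ι : K →+* R) (t : R) (P : Fin n → K[X]) : R :=
  ∑ j, (P j).eval₂ ι (t ^ n) * t ^ (j : ℕ)

theorem sum_mul_pow_eq_eval₂ (ι : K →+* R) (t : R) (n : ℕ) (p : K[X]) :
    (p.sum fun k a => ι a * t ^ (n * k)) = p.eval₂ ι (t ^ n) := by
  simp only [eval₂_eq_sum, pow_mul]

section Coordinates

variable {n : ℕ} (ι : K →+* R) (t : R)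

theorem coeff_eval₂_mul_pow (coeff : R →+ (ℕ →₀ K))
    (hcoeff : ∀ (a : K) (i : ℕ), coeff (ι a * t ^ i) = Finsupp.single i a) (p : K[X]) (j : ℕ) :
    coeff (p.eval₂ ι (t ^ n) * t ^ j) =
      ∑ k ∈ p.support, Finsupp.single (n * k + j) (p.coeff k) := by
  rw [eval₂_eq_sum, Polynomial.sum_def, Finset.sum_mul, map_sum]
  refine Finset.sum_congr rfl fun k _ => ?_
  rw [mul_assoc, ← pow_mul, ← pow_add, hcoeff]

theorem coeff_ofCoords (coeff : R →+ (ℕ →₀ K))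
    (hcoeff : ∀ (a : K) (i : ℕ), coeff (ι a * t ^ i) = Finsupp.single i a)
    (P : Fin n → K[X]) (m : ℕ) (j : Fin n) :
    coeff (ofCoords ι t P) (n * m + j) = (P j).coeff m := by
  simp only [ofCoords, map_sum, coeff_eval₂_mul_pow ι t coeff hcoeff, Finset.sum_apply',
    Finsupp.single_apply, mul_add_eq_mul_add_iff, ite_and, Finset.sum_ite_eq']
  rw [Fintype.sum_eq_single j fun x hx => by simp [hx], if_pos rfl]
  exact ite_eq_left_iff.mpr fun h => (notMem_support_iff.mp h).symm

theorem ofCoords_injective (coeff : R →+ (ℕ →₀ K))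
    (hcoeff : ∀ (a : K) (i : ℕ), coeff (ι a * t ^ i) = Finsupp.single i a) :
    Function.Injective (ofCoords (n := n) ι t) := fun P Q h =>
  funext fun j => Polynomial.ext fun m => by
    rw [← coeff_ofCoords ι t coeff hcoeff, h, coeff_ofCoords ι t coeff hcoeff]

theorem ofCoords_single [DecidableEq (Fin n)] (i : Fin n) (p : K[X]) :
    ofCoords ι t (Pi.single i p) = p.eval₂ ι (t ^ n) * t ^ (i : ℕ) := by
  rw [ofCoords, Fintype.sum_eq_single i fun j hj => by simp [hj], Pi.single_eq_same]

theorem mul_eval₂_eq_eval₂_map_mul {s : K →+* K} (hmul : ∀ a, t * ι a = ι (s a) * t)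
    (p : K[X]) : t * p.eval₂ ι (t ^ n) = (p.map s).eval₂ ι (t ^ n) * t := by
  rw [eval₂_map, eval₂_eq_sum, eval₂_eq_sum, Polynomial.sum_def, Polynomial.sum_def,
    Finset.mul_sum, Finset.sum_mul]
  refine Finset.sum_congr rfl fun k _ => ?_
  rw [← mul_assoc, hmul, RingHom.comp_apply, mul_assoc, mul_assoc, ← pow_mul,
    (Commute.self_pow t _).eq]

theorem mul_ofCoords {s : K →+* K} (hmul : ∀ a, t * ι a = ι (s a) * t) (P : Fin n → K[X]) :
    t * ofCoords ι t P = ofCoords ι t (fun j => (P j).map s) * t := by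
  simp only [ofCoords, Finset.mul_sum, Finset.sum_mul, ← mul_assoc,
    mul_eval₂_eq_eval₂_map_mul ι t hmul]
  simp only [mul_assoc, ← pow_succ, ← pow_succ']

end Coordinates

/-- `ρ g` is the matrix of right multiplication by `g` on `R` as a left `K[tⁿ]`-module,
in the basis `1, t, …, tⁿ⁻¹`. -/
def IsRightRegularRep {n : ℕ} (ι : K →+* R) (t : R) (ρ : R → Matrix (Fin n) (Fin n) K[X]) :
    Prop :=
  ∀ (g : R) (i : Fin n), t ^ (i : ℕ) * g = ofCoords ι t (ρ g i)

section RightRegularRep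

variable {n : ℕ} {ι : K →+* R} {t : R} {ρ : R → Matrix (Fin n) (Fin n) K[X]}

theorem IsRightRegularRep.ofCoords_mul (hρ : IsRightRegularRep ι t ρ)
    (hc : ∀ a, Commute (ι a) (t ^ n)) (P : Fin n → K[X]) (g : R) :
    ofCoords ι t P * g = ofCoords ι t (P ᵥ* ρ g) := by
  have heval_mul (p q : K[X]) :
      (p * q).eval₂ ι (t ^ n) = p.eval₂ ι (t ^ n) * q.eval₂ ι (t ^ n) :=
    eval₂_mul_noncomm _ _ fun _ => hc _
  simp only [ofCoords, Finset.sum_mul, mul_assoc, hρ g, Finset.mul_sum, vecMul, dotProduct,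
    eval₂_finsetSum, heval_mul]
  rw [Finset.sum_comm]

theorem IsRightRegularRep.eq_ofCoords (hρ : IsRightRegularRep ι t ρ) (hn : 0 < n) (g : R) :
    g = ofCoords ι t (ρ g ⟨0, hn⟩) := by
  simpa using hρ g ⟨0, hn⟩

theorem IsRightRegularRep.injective (hρ : IsRightRegularRep ι t ρ) (hn : 0 < n) :
    Function.Injective ρ := fun g h hgh => by
  rw [hρ.eq_ofCoords hn g, hρ.eq_ofCoords hn h, hgh]

theorem IsRightRegularRep.eq_of_forall (hρ : IsRightRegularRep ι t ρ)
    (hinj : Function.Injective (ofCoords (n := n) ι t)) {g : R}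
    {M : Matrix (Fin n) (Fin n) K[X]} (h : ∀ i : Fin n, t ^ (i : ℕ) * g = ofCoords ι t (M i)) :
    ρ g = M :=
  funext fun i => hinj ((hρ g i).symm.trans (h i))

theorem IsRightRegularRep.map_mul (hρ : IsRightRegularRep ι t ρ)
    (hc : ∀ a, Commute (ι a) (t ^ n)) (hinj : Function.Injective (ofCoords (n := n) ι t))
    (g h : R) :
    ρ (g * h) = ρ g * ρ h :=
  hρ.eq_of_forall hinj fun i => by
    rw [← mul_assoc, hρ g i, hρ.ofCoords_mul hc, mul_apply_eq_vecMul]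

theorem IsRightRegularRep.map_one (hρ : IsRightRegularRep ι t ρ)
    (hinj : Function.Injective (ofCoords (n := n) ι t)) :
    ρ 1 = 1 :=
  hρ.eq_of_forall hinj fun i => by
    rw [show (1 : Matrix (Fin n) (Fin n) K[X]) i = Pi.single i 1 from
      funext fun j => one_eq_pi_single, ofCoords_single, eval₂_one, mul_one, one_mul]

theorem IsRightRegularRep.map_pow_self (hρ : IsRightRegularRep ι t ρ)
    (hinj : Function.Injective (ofCoords (n := n) ι t)) :
    ρ (t ^ n) = diagonal fun _ => X :=
  hρ.eq_of_forall hinj fun i => by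
    rw [show (diagonal fun _ => (X : K[X])) i = Pi.single i X from
      funext fun j => by simp [diagonal_apply, Pi.single_apply, eq_comm],
      ofCoords_single, eval₂_X, ← pow_add, ← pow_add, add_comm]

def IsRightRegularRep.toMonoidHom (hρ : IsRightRegularRep ι t ρ)
    (hc : ∀ a, Commute (ι a) (t ^ n)) (hinj : Function.Injective (ofCoords (n := n) ι t)) :
    R →* Matrix (Fin n) (Fin n) K[X] where
  toFun := ρ
  map_one' := hρ.map_one hinj
  map_mul' := hρ.map_mul hc hinj

theorem IsRightRegularRep.map_map_mul (hρ : IsRightRegularRep ι t ρ)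
    (hc : ∀ a, Commute (ι a) (t ^ n)) (hinj : Function.Injective (ofCoords (n := n) ι t))
    {s : K →+* K} (hmul : ∀ a, t * ι a = ι (s a) * t) (g : R) :
    (ρ g).map (map s) * ρ t = ρ (t * g) :=
  (hρ.eq_of_forall hinj fun i => by
    calc t ^ (i : ℕ) * (t * g) = t * (t ^ (i : ℕ) * g) := by
          rw [← mul_assoc, ← mul_assoc, (Commute.self_pow t _).eq]
      _ = t * ofCoords ι t (ρ g i) := by rw [hρ g i]
      _ = ofCoords ι t ((ρ g).map (map s) i) * t := mul_ofCoords ι t hmul _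
      _ = ofCoords ι t (((ρ g).map (map s) * ρ t) i) := hρ.ofCoords_mul hc _ _).symm

theorem IsRightRegularRep.det_self_ne_zero (hρ : IsRightRegularRep ι t ρ)
    (hc : ∀ a, Commute (ι a) (t ^ n)) (hinj : Function.Injective (ofCoords (n := n) ι t))
    (hn : 0 < n) :
    (ρ t).det ≠ 0 := by
  have hpow : (ρ t).det ^ n = X ^ n := by
    have h : ρ (t ^ n) = ρ t ^ n := map_pow (hρ.toMonoidHom hc hinj) t n
    rw [← det_pow, ← h, hρ.map_pow_self hinj, det_diagonal, Finset.prod_const, Finset.card_fin]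
  intro h0
  rw [h0, zero_pow hn.ne'] at hpow
  exact pow_ne_zero n X_ne_zero hpow.symm

theorem IsRightRegularRep.map_det (hρ : IsRightRegularRep ι t ρ)
    (hc : ∀ a, Commute (ι a) (t ^ n)) (hinj : Function.Injective (ofCoords (n := n) ι t))
    (hn : 0 < n) {s : K →+* K} (hmul : ∀ a, t * ι a = ι (s a) * t) (g : R) :
    (ρ g).det.map s = (ρ g).det := by
  have h := congrArg det (hρ.map_map_mul hc hinj hmul g)
  rw [hρ.map_mul hc hinj, det_mul, det_mul, mul_comm (ρ t).det] at h
  have hmap : ((ρ g).map (map s)).det = (ρ g).det.map s := by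
    simpa using ((mapRingHom s).map_det (ρ g)).symm
  rw [hmap] at h
  exact mul_right_cancel₀ (hρ.det_self_ne_zero hc hinj hn) h

theorem IsRightRegularRep.isUnit_of_isUnit_det (hρ : IsRightRegularRep ι t ρ)
    (hc : ∀ a, Commute (ι a) (t ^ n)) (hinj : Function.Injective (ofCoords (n := n) ι t))
    (hn : 0 < n) {g : R} (hg : IsUnit (ρ g).det) : IsUnit g := by
  set u := ofCoords ι t ((ρ g)⁻¹ ⟨0, hn⟩)
  have hug : u * g = 1 := by
    rw [hρ.ofCoords_mul hc, ← mul_apply_eq_vecMul, nonsing_inv_mul _ hg, ← hρ.map_one hinj,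
      ← hρ.eq_ofCoords hn]
  have hgu : g * u = 1 := hρ.injective hn <| by
    rw [hρ.map_mul hc hinj, hρ.map_one hinj]
    exact mul_eq_one_comm.mp (by rw [← hρ.map_mul hc hinj, hug, hρ.map_one hinj])
  exact ⟨⟨g, u, hgu, hug⟩, rfl⟩

end RightRegularRep

theorem mem_lifts_of_map_eq {F K : Type*} [Field F] [Field K] [Algebra F K] [IsGalois F K]
    [FiniteDimensional F K] {σ : K ≃ₐ[F] K} (hσ : ∀ τ : K ≃ₐ[F] K, τ ∈ Subgroup.zpowers σ)
    {p : K[X]} (hp : p.map (σ : K →+* K) = p) : p ∈ lifts (algebraMap F K) := by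
  refine (lifts_iff_coeff_lifts p).mpr fun m =>
    (IsGalois.mem_range_algebraMap_iff_fixed _).mpr fun τ => ?_
  have hfix : σ ∈ MulAction.stabilizer (K ≃ₐ[F] K) (p.coeff m) := by
    rw [MulAction.mem_stabilizer_iff, AlgEquiv.smul_def]
    simpa using congrArg (coeff · m) hp
  exact Subgroup.zpowers_le.mpr hfix (hσ τ)

end SkewNorm

open SkewNorm in
theorem irreducible_of_irreducible_norm_general
    (F K : Type) [Field F] [Field K] [Algebra F K] [IsGalois F K]
    (n : ℕ) (hn : 0 < n) (hdim : Module.finrank F K = n)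
    (σ : K ≃ₐ[F] K) (hσgen : ∀ τ : K ≃ₐ[F] K, τ ∈ Subgroup.zpowers σ)
    (R : Type) [Ring R] (ι : K →+* R) (t : R)
    (hmul : ∀ a : K, t * ι a = ι (σ a) * t)
    (coeff : R →+ (ℕ →₀ K))
    (hcoeff : ∀ (a : K) (i : ℕ), coeff (ι a * t ^ i) = Finsupp.single i a)
    (ρ : R → Matrix (Fin n) (Fin n) (Polynomial K))
    (hρ : ∀ (g : R) (i : Fin n), t ^ (i : ℕ) * g =
      ∑ j : Fin n, ((ρ g i j).sum fun k a => ι a * t ^ (n * k)) * t ^ (j : ℕ))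
    (N : R → Polynomial K) (hN : ∀ g : R, N g = (ρ g).det)
    (f : R)
    -- N(f), as a polynomial in F[x], is irreducible:
    (q : Polynomial F) (hq : q.map (algebraMap F K) = N f) (hqirr : Irreducible q) :
    Irreducible f := by
  have : FiniteDimensional F K := Module.finite_of_finrank_pos (hdim ▸ hn)
  have hσn : σ ^ n = 1 := by
    rw [← hdim, ← IsGalois.card_aut_eq_finrank]
    exact pow_card_eq_one'
  have hc : ∀ a, Commute (ι a) (t ^ n) := fun a => by
    have h := pow_mul_eq_of_mul_eq hmul n a
    rw [← AlgEquiv.coe_pow, hσn, AlgEquiv.one_apply] at h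
    exact h.symm
  have hρ' : IsRightRegularRep ι t ρ := fun g i => by
    simp only [hρ g i, ofCoords, sum_mul_pow_eq_eval₂]
  have hinj := ofCoords_injective (n := n) ι t coeff hcoeff
  refine irreducible_of_irreducible_of_map_eq (detMonoidHom.comp (hρ'.toMonoidHom hc hinj))
    (mapRingHom (algebraMap F K)) (map_injective _ (algebraMap F K).injective) (fun g => ?_)
    (fun g => hρ'.isUnit_of_isUnit_det hc hinj hn) (fun p => (isUnit_map _).mp) hqirr
    (hq.trans (hN f))
  exact (mem_lifts _).mp (mem_lifts_of_map_eq hσgen (hρ'.map_det hc hinj hn hmul g))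

/-- If `f ∈ R = K[t;σ]` and the reduced norm `N(f)` is irreducible in `F[x]`,
then `f` is irreducible in `R`. -/
theorem irreducible_of_irreducible_norm
    (F K : Type) [Field F] [Field K] [Algebra F K] [IsGalois F K]
    (n : ℕ) (hn : 0 < n) (hdim : Module.finrank F K = n)
    (σ : K ≃ₐ[F] K) (hσgen : ∀ τ : K ≃ₐ[F] K, τ ∈ Subgroup.zpowers σ)
    (R : Type) [Ring R] (ι : K →+* R) (t : R)
    (hmul : ∀ a : K, t * ι a = ι (σ a) * t)
    (coeff : R →+ (ℕ →₀ K))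
    (hcoeff : ∀ (a : K) (i : ℕ), coeff (ι a * t ^ i) = Finsupp.single i a)
    (hrepr : ∀ x : R, (coeff x).sum (fun i a => ι a * t ^ i) = x)
    (ρ : R → Matrix (Fin n) (Fin n) (Polynomial K))
    (hρ : ∀ (g : R) (i : Fin n), t ^ (i : ℕ) * g =
      ∑ j : Fin n, ((ρ g i j).sum fun k a => ι a * t ^ (n * k)) * t ^ (j : ℕ))
    (N : R → Polynomial K) (hN : ∀ g : R, N g = (ρ g).det)
    (f : R)
    -- N(f), as a polynomial in F[x], is irreducible:
    (q : Polynomial F) (hq : q.map (algebraMap F K) = N f) (hqirr : Irreducible q) :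
    Irreducible f :=
  irreducible_of_irreducible_norm_general F K n hn hdim σ hσgen R ι t hmul coeff hcoeff ρ hρ N hN f
    q hq hqirr
end
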